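/- arXiv:1203.1198 — 2 statements merged into one kernel-verified Lean document; each statement's English description precedes it below -/
import Mathlib

section
/- Let G be a group, ℓ : G → ℕ a length function, 𝒫 ⊆ G × G, and let k, p ∈ ℕ with p ≤ k. Let φ : G → ℂ be a finitely supported function whose support is contained in C_k. Define φ^{(p)} : G → ℝ by φ^{(p)}(g) = (Σ_{h ∈ C_p, (g,h) ∈ 𝒫} |φ(gh)|²)^{1/2} for g ∈ C_{k−p} and φ^{(p)}(g) = 0 otherwise, and define ^{(p)}φ : G → ℝ by ^{(p)}φ(g) = (Σ_{h ∈ C_p, (h,g) ∈ 𝒫} |φ(hg)|²)^{1/2} for g ∈ C_{k−p} and ^{(p)}φ(g) = 0 otherwise. Then, for any M ∈ ℕ: if F_{𝒫,k−p,p} ≤ M then Σ_{g∈G} φ^{(p)}(g)² ≤ M · Σ_{g∈G} |φ(g)|², and if F_{𝒫,p,k−p} ≤ M then Σ_{g∈G} (^{(p)}φ)(g)² ≤ M · Σ_{g∈G} |φ(g)|². -/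
/-!
Expanding the squares, `∑ φ^{(p)}(g)²` is the sum of `|φ(gh)|²` over the permissible pairs
`(g, h)` of lengths `(k - p, p)`. Grouping these pairs by their product `x = gh` counts `|φ(x)|²`
once per permissible factorisation of `x`; since `φ` lives on `C_k`, only `x` of length `k`
contribute, each at most `M` times. Swapping the factors gives the bound for `^{(p)}φ`.
-/

namespace ArtinRD

/-- `Fact_{𝒬,k,l}(g)`: permissible factorisations of `g` into a product of elements
of lengths `k` and `l`. -/
def FactSet {G : Type*} [Group G] (ℓ : G → ℕ) (𝒬 : Set (G × G)) (k l : ℕ) (g : G) :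
    Set (G × G) :=
  {p | p ∈ 𝒬 ∧ p.1 * p.2 = g ∧ ℓ p.1 = k ∧ ℓ p.2 = l}

section FibreCounting

open Finset

variable {ι γ : Type*} {f : γ → ℝ} {S : Set ι} {μ : ι → γ} {M : ℕ}

theorem finite_inter_preimage {t : Set γ} (ht : t.Finite)
    (hfib : ∀ x ∈ t, (S ∩ μ ⁻¹' {x}).Finite) : (S ∩ μ ⁻¹' t).Finite := by
  rw [← Set.biUnion_of_singleton t, Set.preimage_iUnion₂, Set.inter_iUnion₂]
  exact ht.biUnion hfib

theorem support_indicator_comp :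
    (S.indicator (f ∘ μ)).support = S ∩ μ ⁻¹' f.support := by
  rw [Set.support_indicator, Function.support_comp_eq_preimage]

/-- Summing `f ∘ μ` over `S` counts every value `f x` once per point of the fibre of `x`. -/
theorem tsum_indicator_comp_le_mul_tsum (hf : 0 ≤ f) (hfs : f.support.Finite)
    (hfib : ∀ x, f x ≠ 0 → (S ∩ μ ⁻¹' {x}).Finite ∧ (S ∩ μ ⁻¹' {x}).ncard ≤ M) :
    ∑' q, S.indicator (f ∘ μ) q ≤ M * ∑' x, f x := by
  classical
  set T := (finite_inter_preimage hfs fun x hx => (hfib x hx).1).toFinset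
  have hT : (S.indicator (f ∘ μ)).support ⊆ T := by
    rw [support_indicator_comp, Set.Finite.coe_toFinset]
  have hcard : ∀ x ∈ T.image μ, #{q ∈ T | μ q = x} ≤ M := by
    intro x hx
    obtain ⟨q, hq, rfl⟩ := Finset.mem_image.1 hx
    have hq' : q ∈ S ∧ f (μ q) ≠ 0 := by simpa [T] using hq
    refine le_trans ?_ (hfib _ hq'.2).2
    rw [← Set.ncard_coe_finset]
    exact Set.ncard_le_ncard (fun r hr => by simp_all [T]) (hfib _ hq'.2).1
  calc ∑' q, S.indicator (f ∘ μ) q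
      = ∑ q ∈ T, f (μ q) :=
        (tsum_eq_sum' hT).trans <| Finset.sum_congr rfl fun q hq =>
          Set.indicator_of_mem (by simp_all [T]) _
    _ = ∑ x ∈ T.image μ, #{q ∈ T | μ q = x} • f x := Finset.sum_comp f μ
    _ ≤ ∑ x ∈ T.image μ, M * f x := Finset.sum_le_sum fun x hx => by
        rw [nsmul_eq_mul]
        exact mul_le_mul_of_nonneg_right (by exact_mod_cast hcard x hx) (hf x)
    _ ≤ M * ∑' x, f x := by
        rw [← Finset.mul_sum]
        exact mul_le_mul_of_nonneg_left
          ((summable_of_hasFiniteSupport hfs).sum_le_tsum _ fun x _ => hf x) (Nat.cast_nonneg M)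

end FibreCounting

theorem tsum_tsum_indicator_comp_le_mul_tsum {α β γ : Type*} {f : γ → ℝ} {S : Set (α × β)}
    {μ : α × β → γ} {M : ℕ}
    (hf : 0 ≤ f) (hfs : f.support.Finite)
    (hfib : ∀ x, f x ≠ 0 → (S ∩ μ ⁻¹' {x}).Finite ∧ (S ∩ μ ⁻¹' {x}).ncard ≤ M) :
    ∑' a, ∑' b, S.indicator (f ∘ μ) (a, b) ≤ M * ∑' x, f x := by
  have hsum : Summable (S.indicator (f ∘ μ)) := summable_of_hasFiniteSupport <| by
    rw [Function.HasFiniteSupport, support_indicator_comp]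
    exact finite_inter_preimage hfs fun x hx => (hfib x hx).1
  rw [← hsum.tsum_prod]
  exact tsum_indicator_comp_le_mul_tsum hf hfs hfib

theorem sq_ite_sqrt_tsum_subtype {β : Type*} (P : Prop) [Decidable P] (Q : β → Prop)
    (F : β → ℝ) (hF : 0 ≤ F) :
    (if P then √(∑' b : {b // Q b}, F b) else 0) ^ 2 = ∑' b, {b | P ∧ Q b}.indicator F b := by
  by_cases hP : P
  · rw [if_pos hP, Real.sq_sqrt (tsum_nonneg fun b : {b // Q b} => hF b)]
    exact (tsum_subtype {b | Q b} F).trans (by simp [hP])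
  · simp [hP]

theorem inter_mul_preimage_eq_factSet {G : Type*} [Group G] (ℓ : G → ℕ) (𝒬 : Set (G × G))
    (k l : ℕ) (x : G) :
    {q : G × G | ℓ q.1 = k ∧ ℓ q.2 = l ∧ q ∈ 𝒬} ∩ (fun q => q.1 * q.2) ⁻¹' {x} =
      FactSet ℓ 𝒬 k l x := by
  ext q
  simp only [FactSet, Set.mem_inter_iff, Set.mem_ofPred_eq, Set.mem_preimage,
    Set.mem_singleton_iff]
  tauto

theorem inter_swap_mul_preimage_eq_preimage_factSet {G : Type*} [Group G] (ℓ : G → ℕ)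
    (𝒬 : Set (G × G)) (k l : ℕ) (x : G) :
    {q : G × G | ℓ q.1 = k ∧ ℓ q.2 = l ∧ q.swap ∈ 𝒬} ∩ (fun q => q.2 * q.1) ⁻¹' {x} =
      Prod.swap ⁻¹' FactSet ℓ 𝒬 l k x := by
  ext q
  simp only [FactSet, Set.mem_inter_iff, Set.mem_ofPred_eq, Set.mem_preimage,
    Set.mem_singleton_iff, Prod.fst_swap, Prod.snd_swap]
  tauto

theorem l2_bound_of_factorisation_bound_general
    {G : Type*} [Group G] (ℓ : G → ℕ)
    (𝒬 : Set (G × G)) (k p : ℕ)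
    (φ : G →₀ ℂ) (hφ : ∀ g : G, φ g ≠ 0 → ℓ g = k)
    (φp pφ : G → ℝ)
    (hφp : ∀ g : G, φp g = if ℓ g = k - p then
        Real.sqrt (∑' h : {h : G // ℓ h = p ∧ (g, h) ∈ 𝒬}, ‖φ (g * ↑h)‖ ^ 2) else 0)
    (hpφ : ∀ g : G, pφ g = if ℓ g = k - p then
        Real.sqrt (∑' h : {h : G // ℓ h = p ∧ (h, g) ∈ 𝒬}, ‖φ (↑h * g)‖ ^ 2) else 0)
    (M : ℕ) :
    ((∀ g : G, ℓ g = k →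
        (FactSet ℓ 𝒬 (k - p) p g).Finite ∧ (FactSet ℓ 𝒬 (k - p) p g).ncard ≤ M) →
      ∑' g : G, (φp g) ^ 2 ≤ (M : ℝ) * ∑' g : G, ‖φ g‖ ^ 2) ∧
    ((∀ g : G, ℓ g = k →
        (FactSet ℓ 𝒬 p (k - p) g).Finite ∧ (FactSet ℓ 𝒬 p (k - p) g).ncard ≤ M) →
      ∑' g : G, (pφ g) ^ 2 ≤ (M : ℝ) * ∑' g : G, ‖φ g‖ ^ 2) := by
  set f : G → ℝ := fun x => ‖φ x‖ ^ 2
  have hf : 0 ≤ f := fun x => sq_nonneg _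
  have hfs : f.support.Finite := φ.support.finite_toSet.subset fun x hx => by simpa [f] using hx
  have hlen : ∀ x, f x ≠ 0 → ℓ x = k := fun x hx => hφ x (by simpa [f] using hx)
  refine ⟨fun hF => ?_, fun hF => ?_⟩
  · calc ∑' g, φp g ^ 2
        = ∑' g, ∑' h, {q : G × G | ℓ q.1 = k - p ∧ ℓ q.2 = p ∧ q ∈ 𝒬}.indicator
            (f ∘ fun q => q.1 * q.2) (g, h) :=
          tsum_congr fun g => by
            rw [hφp]
            exact sq_ite_sqrt_tsum_subtype _ _ (fun h => f (g * h)) fun h => hf (g * h)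
      _ ≤ M * ∑' x, f x := tsum_tsum_indicator_comp_le_mul_tsum hf hfs fun x hx => by
          rw [inter_mul_preimage_eq_factSet]
          exact hF x (hlen x hx)
  · calc ∑' g, pφ g ^ 2
        = ∑' g, ∑' h, {q : G × G | ℓ q.1 = k - p ∧ ℓ q.2 = p ∧ q.swap ∈ 𝒬}.indicator
            (f ∘ fun q => q.2 * q.1) (g, h) :=
          tsum_congr fun g => by
            rw [hpφ]
            exact sq_ite_sqrt_tsum_subtype _ _ (fun h => f (h * g)) fun h => hf (h * g)
      _ ≤ M * ∑' x, f x := tsum_tsum_indicator_comp_le_mul_tsum hf hfs fun x hx => by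
          rw [inter_swap_mul_preimage_eq_preimage_factSet]
          obtain ⟨hfin, hcard⟩ := hF x (hlen x hx)
          exact ⟨hfin.preimage Prod.swap_injective.injOn,
            (Set.ncard_preimage_of_injective_subset_range Prod.swap_injective
              (Prod.swap_surjective.range_eq ▸ Set.subset_univ _)).trans_le hcard⟩

/-- **Lemma.** If the function `φ` is supported on the sphere `C_k` and the permissible
factorisation numbers `F_{𝒬,k−p,p}` (resp. `F_{𝒬,p,k−p}`) are bounded by `M`, then the
`ℓ²` norms of the derived functions `φ^{(p)}` and `^{(p)}φ` are bounded by `M` times the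
`ℓ²` norm of `φ`. -/
theorem l2_bound_of_factorisation_bound
    {G : Type*} [Group G] (ℓ : G → ℕ)
    (hone : ℓ 1 = 0) (hinv : ∀ g : G, ℓ g⁻¹ = ℓ g)
    (hsub : ∀ g h : G, ℓ (g * h) ≤ ℓ g + ℓ h)
    (𝒬 : Set (G × G)) (k p : ℕ) (hpk : p ≤ k)
    (φ : G →₀ ℂ) (hφ : ∀ g : G, φ g ≠ 0 → ℓ g = k)
    (φp pφ : G → ℝ)
    (hφp : ∀ g : G, φp g = if ℓ g = k - p then
        Real.sqrt (∑' h : {h : G // ℓ h = p ∧ (g, h) ∈ 𝒬}, ‖φ (g * ↑h)‖ ^ 2) else 0)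
    (hpφ : ∀ g : G, pφ g = if ℓ g = k - p then
        Real.sqrt (∑' h : {h : G // ℓ h = p ∧ (h, g) ∈ 𝒬}, ‖φ (↑h * g)‖ ^ 2) else 0)
    (M : ℕ) :
    ((∀ g : G, ℓ g = k →
        (FactSet ℓ 𝒬 (k - p) p g).Finite ∧ (FactSet ℓ 𝒬 (k - p) p g).ncard ≤ M) →
      ∑' g : G, (φp g) ^ 2 ≤ (M : ℝ) * ∑' g : G, ‖φ g‖ ^ 2) ∧
    ((∀ g : G, ℓ g = k →
        (FactSet ℓ 𝒬 p (k - p) g).Finite ∧ (FactSet ℓ 𝒬 p (k - p) g).ncard ≤ M) →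
      ∑' g : G, (pφ g) ^ 2 ≤ (M : ℝ) * ∑' g : G, ‖φ g‖ ^ 2) :=
  l2_bound_of_factorisation_bound_general ℓ 𝒬 k p φ hφ φp pφ hφp hpφ M

end ArtinRD
end

section
/- Let m ≥ 3 and let g be a positive element of DA(m) with r = d(g). Let w and w' be geodesic words over {x_1, x_2} representing g such that, for some 0 ≤ s ≤ r, both w and w' have the word (_m(x_1,x_2))^s as a prefix and the word (_m(x_1,x_2))^{r−s} as a suffix. Then w = w' as words. -/
namespace ArtinRD

/-- The alternating product `xyxy...` with `m` factors, starting with `x`. -/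
def altProd {G : Type*} [Monoid G] : ℕ → G → G → G
  | 0, _, _ => 1
  | n + 1, x, y => x * altProd n y x

/-- The Artin relators determined by a Coxeter-type matrix `M` (`⊤` meaning `∞`). -/
def artinRels (n : ℕ) (M : Fin n → Fin n → ℕ∞) : Set (FreeGroup (Fin n)) :=
  {r | ∃ i j : Fin n, i ≠ j ∧ ∃ m : ℕ, M i j = (m : ℕ∞) ∧
    r = altProd m (FreeGroup.of i) (FreeGroup.of j) *
        (altProd m (FreeGroup.of j) (FreeGroup.of i))⁻¹}

/-- The Artin group associated to the matrix `M`. -/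
abbrev ArtinGroup (n : ℕ) (M : Fin n → Fin n → ℕ∞) : Type := PresentedGroup (artinRels n M)

/-- The standard generator `x_i` of the Artin group. -/
def gen (n : ℕ) (M : Fin n → Fin n → ℕ∞) (i : Fin n) : ArtinGroup n M := PresentedGroup.of i

/-- The set `A = {x_1^{±1}, ..., x_n^{±1}}` of standard letters. -/
def genSet (n : ℕ) (M : Fin n → Fin n → ℕ∞) : Set (ArtinGroup n M) :=
  {g | ∃ i : Fin n, g = gen n M i ∨ g = (gen n M i)⁻¹}

/-- Word length of `g` with respect to a set `S`: the least `N` such that `g` is a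
product of `N` elements of `S`. -/
noncomputable def wordLength {G : Type*} [Group G] (S : Set G) (g : G) : ℕ :=
  sInf {N : ℕ | ∃ w : List G, (∀ a ∈ w, a ∈ S) ∧ w.length = N ∧ w.prod = g}

/-- The word length on an Artin group with respect to the standard letters. -/
noncomputable def ℓA (n : ℕ) (M : Fin n → Fin n → ℕ∞) : ArtinGroup n M → ℕ :=
  wordLength (genSet n M)

/-- A letter: a generator index together with a sign (`true` = positive). -/
abbrev Letter (n : ℕ) := Fin n × Bool

/-- The group element corresponding to a letter. -/
def toGen (n : ℕ) (M : Fin n → Fin n → ℕ∞) (l : Letter n) : ArtinGroup n M :=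
  if l.2 then gen n M l.1 else (gen n M l.1)⁻¹

/-- The group element represented by a word over the letters. -/
def wordElt (n : ℕ) (M : Fin n → Fin n → ℕ∞) (w : List (Letter n)) : ArtinGroup n M :=
  (w.map (toGen n M)).prod

/-- A word is geodesic if its length equals the word length of the element it represents. -/
def IsGeodesic (n : ℕ) (M : Fin n → Fin n → ℕ∞) (w : List (Letter n)) : Prop :=
  wordLength (genSet n M) (wordElt n M w) = w.length

/-- `h` is a left divisor of `g`: the factorisation `g = h ⬝ (h⁻¹ g)` is geodesic. -/
def IsLeftDiv {G : Type*} [Group G] (ℓ : G → ℕ) (h g : G) : Prop :=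
  ℓ h + ℓ (h⁻¹ * g) = ℓ g

/-- `h` is a right divisor of `g`: the factorisation `g = (g h⁻¹) ⬝ h` is geodesic. -/
def IsRightDiv {G : Type*} [Group G] (ℓ : G → ℕ) (h g : G) : Prop :=
  ℓ (g * h⁻¹) + ℓ h = ℓ g

/-- The two-generator ("dihedral") subgroup `G(i,j)`. -/
def Gij (n : ℕ) (M : Fin n → Fin n → ℕ∞) (i j : Fin n) : Subgroup (ArtinGroup n M) :=
  Subgroup.closure {gen n M i, gen n M j}

/-- The letters `x_i^{±1}, x_j^{±1}` as group elements. -/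
def lettersIJ (n : ℕ) (M : Fin n → Fin n → ℕ∞) (i j : Fin n) : Set (ArtinGroup n M) :=
  {gen n M i, (gen n M i)⁻¹, gen n M j, (gen n M j)⁻¹}

/-- The maximal `{x_i,x_j}`-prefix of a word. -/
def ijPrefix (n : ℕ) (i j : Fin n) (w : List (Letter n)) : List (Letter n) :=
  w.takeWhile (fun l => l.1 == i || l.1 == j)

/-- `h` is a left divisor of `g` lying in `G(i,j)` of maximal word length. -/
def IsMaxLD (n : ℕ) (M : Fin n → Fin n → ℕ∞) (i j : Fin n) (g h : ArtinGroup n M) : Prop :=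
  h ∈ Gij n M i j ∧ IsLeftDiv (ℓA n M) h g ∧
    ∀ h' ∈ Gij n M i j, IsLeftDiv (ℓA n M) h' g → ℓA n M h' ≤ ℓA n M h

/-- `h` is a right divisor of `g` lying in `G(i,j)` of maximal word length. -/
def IsMaxRD (n : ℕ) (M : Fin n → Fin n → ℕ∞) (i j : Fin n) (g h : ArtinGroup n M) : Prop :=
  h ∈ Gij n M i j ∧ IsRightDiv (ℓA n M) h g ∧
    ∀ h' ∈ Gij n M i j, IsRightDiv (ℓA n M) h' g → ℓA n M h' ≤ ℓA n M h

/-- The Coxeter matrix of the dihedral Artin group `DA(m)`. -/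
def DMat (m : ℕ) : Fin 2 → Fin 2 → ℕ∞ := fun i j => if i = j then 1 else (m : ℕ∞)

/-- The dihedral Artin group `DA(m) = ⟨x₁, x₂ ∣ ₘ(x₁,x₂) = ₘ(x₂,x₁)⟩`. -/
abbrev DA (m : ℕ) : Type := ArtinGroup 2 (DMat m)

/-- The word length on `DA(m)` with respect to `{x₁^{±1}, x₂^{±1}}`. -/
noncomputable def ℓD (m : ℕ) : DA m → ℕ := ℓA 2 (DMat m)

/-- The Garside element `Δ = ₘ(x₁,x₂)` of `DA(m)`. -/
def Delta (m : ℕ) : DA m := altProd m (gen 2 (DMat m) 0) (gen 2 (DMat m) 1)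

/-- A positive element of `DA(m)`: a product of the generators. -/
def posElt (m : ℕ) (g : DA m) : Prop :=
  g ∈ Submonoid.closure ({gen 2 (DMat m) 0, gen 2 (DMat m) 1} : Set (DA m))

/-- A negative element of `DA(m)`: a product of the inverses of the generators. -/
def negElt (m : ℕ) (g : DA m) : Prop :=
  g ∈ Submonoid.closure ({(gen 2 (DMat m) 0)⁻¹, (gen 2 (DMat m) 1)⁻¹} : Set (DA m))

/-- `k` is the largest exponent such that `Δ^k` is a left divisor of `g`
(i.e. `d(g) = k` for a positive element `g`). -/
def IsMaxDeltaPow (m : ℕ) (k : ℕ) (g : DA m) : Prop :=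
  IsLeftDiv (ℓD m) (Delta m ^ k) g ∧ ∀ k' : ℕ, IsLeftDiv (ℓD m) (Delta m ^ k') g → k' ≤ k

/-- `k` is the largest exponent such that `Δ^{-k}` is a left divisor of `g`
(i.e. `d(g) = k` for a negative element `g`). -/
def IsMaxNegDeltaPow (m : ℕ) (k : ℕ) (g : DA m) : Prop :=
  IsLeftDiv (ℓD m) ((Delta m)⁻¹ ^ k) g ∧
    ∀ k' : ℕ, IsLeftDiv (ℓD m) ((Delta m)⁻¹ ^ k') g → k' ≤ k

/-- The alternating word of indices of length `r` starting with `a`. -/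
def altIdx : ℕ → Fin 2 → Fin 2 → List (Fin 2)
  | 0, _, _ => []
  | n + 1, a, b => a :: altIdx n b a

/-- The element of `DA(m)` represented by a positive word. -/
def posWordElt (m : ℕ) (w : List (Fin 2)) : DA m := (w.map (gen 2 (DMat m))).prod

/-- A positive word is geodesic if its length is the word length of the element
it represents. -/
def PosGeodesic (m : ℕ) (w : List (Fin 2)) : Prop :=
  wordLength (genSet 2 (DMat m)) (posWordElt m w) = w.length

/-!
Every positive word is geodesic, because the degree homomorphism `DA(m) → ℤ` sends both
generators to `1`. Split `w = Δ^s u Δ^(r-s)` and `w' = Δ^s u' Δ^(r-s)`; then `u = u'` in `DA(m)`.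
If `u` contained an alternating factor of length `m`, i.e. a copy of `Δ`, then moving it to the
front (conjugation by `Δ` only permutes the generators) would make `Δ^(r+1)` a left divisor of
`g`; so `u`, and likewise `u'`, is `Δ`-free. Finally, `DA(m)` acts by left multiplication on the
normal forms `Δ^d z` with `z` a `Δ`-free positive word (the braid relation holds because both
alternating words of length `m` act as `Δ`), and the element of a `Δ`-free word `z` sends the
normal form `Δ^0 []` to `Δ^0 z`; so `Δ`-free positive words representing the same element coincide.
-/

local notation "σ" => Equiv.swap (0 : Fin 2) 1

lemma eq_swap_of_ne {i j : Fin 2} (h : i ≠ j) : j = σ i := by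
  revert i j; decide

lemma swap_pow_succ_apply (n : ℕ) (c : Fin 2) : (σ ^ (n + 1)) c = (σ ^ n) (σ c) := by
  rw [pow_succ, Equiv.Perm.mul_apply]

def altW (n : ℕ) (c : Fin 2) : List (Fin 2) := altIdx n c (σ c)

@[simp] lemma altW_zero (c : Fin 2) : altW 0 c = [] := rfl

lemma altW_succ (n : ℕ) (c : Fin 2) : altW (n + 1) c = c :: altW n (σ c) := by
  simp [altW, altIdx]

@[simp] lemma altW_length (n : ℕ) (c : Fin 2) : (altW n c).length = n := by
  induction n generalizing c with
  | zero => rfl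
  | succ n ih => simp [altW_succ, ih]

lemma altW_add (a b : ℕ) (c : Fin 2) : altW (a + b) c = altW a c ++ altW b ((σ ^ a) c) := by
  induction a generalizing c with
  | zero => simp
  | succ a ih => rw [Nat.add_right_comm, altW_succ, altW_succ, ih, swap_pow_succ_apply]; rfl

lemma altW_map (π : Equiv.Perm (Fin 2)) (hπ : Commute π σ) (n : ℕ) (c : Fin 2) :
    (altW n c).map π = altW n (π c) := by
  induction n generalizing c with
  | zero => rfl
  | succ n ih =>
    rw [altW_succ, altW_succ, List.map_cons, ih, ← Equiv.Perm.mul_apply, hπ.eq,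
      Equiv.Perm.mul_apply]

lemma altIdx_eq_altW {i j : Fin 2} (h : i ≠ j) (n : ℕ) : altIdx n i j = altW n i := by
  rw [eq_swap_of_ne h]; rfl

lemma prod_map_altIdx {M : Type*} [Monoid M] (f : Fin 2 → M) :
    ∀ (n : ℕ) (a b : Fin 2), ((altIdx n a b).map f).prod = altProd n (f a) (f b)
  | 0, _, _ => rfl
  | n + 1, a, b => by rw [altIdx, altProd, List.map_cons, List.prod_cons, prod_map_altIdx f n b a]

lemma map_altProd {M N F : Type*} [Monoid M] [Monoid N] [FunLike F M N] [MonoidHomClass F M N]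
    (f : F) : ∀ (n : ℕ) (x y : M), f (altProd n x y) = altProd n (f x) (f y)
  | 0, _, _ => map_one f
  | n + 1, x, y => by rw [altProd, altProd, map_mul, map_altProd f n y x]

def altRun (c : Fin 2) : List (Fin 2) → ℕ
  | [] => 0
  | x :: z => if x = c then altRun (σ c) z + 1 else 0

lemma take_altRun (c : Fin 2) (z : List (Fin 2)) : z.take (altRun c z) = altW (altRun c z) c := by
  induction z generalizing c with
  | nil => rfl
  | cons x z ih =>
    by_cases h : x = c
    · subst h; simp [altRun, altW_succ, ih]
    · simp [altRun, h]

lemma altW_prefix_iff {n : ℕ} {c : Fin 2} {z : List (Fin 2)} :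
    altW n c <+: z ↔ n ≤ altRun c z := by
  refine ⟨fun h => ?_, fun h => ?_⟩
  · induction z generalizing n c with
    | nil => simpa [altRun] using congrArg List.length (List.prefix_nil.mp h)
    | cons x z ih =>
      cases n with
      | zero => omega
      | succ n =>
        obtain ⟨rfl, h'⟩ := List.cons_prefix_cons.mp (altW_succ n c ▸ h)
        simpa [altRun] using ih h'
  · have hrun : altW (altRun c z) c <+: z := take_altRun c z ▸ List.take_prefix _ _
    obtain ⟨k, hk⟩ := Nat.exists_eq_add_of_le h
    rw [hk, altW_add] at hrun
    exact (List.prefix_append _ _).trans hrun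

lemma altRun_altW_append (q : ℕ) (c : Fin 2) (z : List (Fin 2)) :
    altRun c (altW q c ++ z) = q + altRun ((σ ^ q) c) z := by
  induction q generalizing c with
  | zero => simp
  | succ q ih =>
    rw [altW_succ, List.cons_append, altRun, if_pos rfl, ih, swap_pow_succ_apply]
    omega

def DeltaFree (m : ℕ) (z : List (Fin 2)) : Prop := ∀ c, ¬ altW m c <:+: z

section DeltaFree

variable {m : ℕ} {y z : List (Fin 2)}

lemma deltaFree_nil (hm : 0 < m) : DeltaFree m [] := fun c h => by
  simpa [hm.ne'] using congrArg List.length (List.eq_nil_of_infix_nil h)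

lemma DeltaFree.mono (hz : DeltaFree m z) (h : y <:+: z) : DeltaFree m y :=
  fun c hc => hz c (hc.trans h)

lemma DeltaFree.drop (hz : DeltaFree m z) (k : ℕ) : DeltaFree m (z.drop k) :=
  hz.mono (List.drop_suffix k z).isInfix

lemma deltaFree_cons_iff {j : Fin 2} :
    DeltaFree m (j :: z) ↔ (∀ c, altRun c (j :: z) < m) ∧ DeltaFree m z := by
  simp only [DeltaFree, List.infix_cons_iff, not_or, altW_prefix_iff, not_le, forall_and]

lemma DeltaFree.cons {j : Fin 2} (hz : DeltaFree m z) (h : ¬ altW m j <+: j :: z) :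
    DeltaFree m (j :: z) := by
  rw [altW_prefix_iff, not_le] at h
  refine deltaFree_cons_iff.mpr ⟨fun c => ?_, hz⟩
  by_cases hc : j = c
  · exact hc ▸ h
  · simp only [altRun, if_neg hc]; omega

lemma DeltaFree.altW_append {q : ℕ} {f : Fin 2} (hz : DeltaFree m z)
    (h : q + altRun ((σ ^ q) f) z < m) : DeltaFree m (altW q f ++ z) := by
  induction q generalizing f with
  | zero => simpa using hz
  | succ q ih =>
    rw [swap_pow_succ_apply] at h
    rw [altW_succ, List.cons_append, deltaFree_cons_iff]
    refine ⟨fun c => ?_, ih (by omega)⟩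
    by_cases hc : f = c
    · subst hc
      rw [← List.cons_append, ← altW_succ, altRun_altW_append, swap_pow_succ_apply]
      omega
    · simp only [altRun, if_neg hc]; omega

end DeltaFree

/-- The element `Δ ^ exp * word` of `DA m`. -/
@[ext] structure NormalForm (m : ℕ) where
  exp : ℤ
  word : List (Fin 2)
  deltaFree : DeltaFree m word

/-- `x_i Δ^d = Δ^d x_j` with `j = twist m d i`: conjugation by `Δ` swaps the generators iff `m`
is odd. -/
def twist (m : ℕ) (d : ℤ) : Equiv.Perm (Fin 2) := (σ ^ m) ^ d

lemma commute_twist_swap (m : ℕ) (d : ℤ) : Commute (twist m d) σ :=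
  ((Commute.refl σ).pow_left m).zpow_left d

/-- Left multiplication by `x_i`: `x_i Δ^d z = Δ^d x_j z` with `j = twist m d i`, and if `j :: z`
begins with an alternating word of length `m`, that prefix is a `Δ` and joins the exponent. -/
def mulGen (m : ℕ) (i : Fin 2) (s : NormalForm m) : NormalForm m :=
  if h : altW m (twist m s.exp i) <+: twist m s.exp i :: s.word then
    ⟨s.exp + 1, s.word.drop (m - 1), s.deltaFree.drop _⟩
  else ⟨s.exp, twist m s.exp i :: s.word, s.deltaFree.cons h⟩

def mulWord (m : ℕ) (w : List (Fin 2)) (s : NormalForm m) : NormalForm m :=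
  w.foldr (mulGen m) s

def mulDeltaPow (m : ℕ) (k : ℤ) (s : NormalForm m) : NormalForm m :=
  ⟨s.exp + k, s.word, s.deltaFree⟩

section Action

variable {m : ℕ}

lemma mulWord_cons (i : Fin 2) (w : List (Fin 2)) (s : NormalForm m) :
    mulWord m (i :: w) s = mulGen m i (mulWord m w s) := rfl

lemma mulWord_singleton (i : Fin 2) (s : NormalForm m) : mulWord m [i] s = mulGen m i s := rfl

lemma mulWord_append (u v : List (Fin 2)) (s : NormalForm m) :
    mulWord m (u ++ v) s = mulWord m u (mulWord m v s) := List.foldr_append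

lemma mulWord_of_deltaFree (u : List (Fin 2)) (s : NormalForm m)
    (h : DeltaFree m (u.map (twist m s.exp) ++ s.word)) :
    mulWord m u s = ⟨s.exp, u.map (twist m s.exp) ++ s.word, h⟩ := by
  induction u with
  | nil => rfl
  | cons i u ih =>
    rw [List.map_cons, List.cons_append] at h
    rw [mulWord_cons, ih (h.mono (List.suffix_cons _ _).isInfix), mulGen,
      dif_neg fun hp => h _ hp.isInfix]
    rfl

lemma mulWord_altW (c : Fin 2) (s : NormalForm m) :
    mulWord m (altW m c) s = mulDeltaPow m 1 s := by
  -- With `t` the length of the alternating run of `z` starting at `e`, the last `m - t` letters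
  -- of `altW m c` complete this run to a `Δ`, which is absorbed; the first `t` letters rebuild it.
  obtain ⟨d, z, hz⟩ := s
  set e := twist m (d + 1) c
  set t := altRun e z
  have ht : t < m := not_le.mp fun h => hz e (altW_prefix_iff.mpr h).isInfix
  obtain ⟨k, hk⟩ : ∃ k, m - t = k + 1 := ⟨m - t - 1, by omega⟩
  set e' := twist m d ((σ ^ t) c)
  have he' : (σ ^ (k + 1)) e' = e :=
    calc (σ ^ (k + 1)) e' = (σ ^ (k + 1) * twist m d * σ ^ t) c := rfl
      _ = (twist m d * σ ^ m) c := by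
        rw [((commute_twist_swap m d).pow_right _).eq.symm, mul_assoc, ← pow_add, ← hk,
          Nat.sub_add_cancel ht.le]
      _ = e := by rw [twist, ← zpow_add_one]; rfl
  have hfree : DeltaFree m (altW k (σ e') ++ z) :=
    hz.altW_append (by rw [← swap_pow_succ_apply, he']; omega)
  have hprefix : altW m e' <+: e' :: (altW k (σ e') ++ z) := by
    rw [← List.cons_append, ← altW_succ, altW_prefix_iff, altRun_altW_append, he']
    omega
  have hz' : altW t e ++ z.drop t = z := by
    rw [← take_altRun]; exact List.take_append_drop _ _
  have hmap_tail : (altW k (σ ((σ ^ t) c))).map (twist m d) = altW k (σ e') := by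
    rw [altW_map _ (commute_twist_swap m d), ← Equiv.Perm.mul_apply, (commute_twist_swap m d).eq]
    rfl
  have htail :
      mulWord m (altW k (σ ((σ ^ t) c))) ⟨d, z, hz⟩ = ⟨d, altW k (σ e') ++ z, hfree⟩ := by
    rw [mulWord_of_deltaFree _ _ (by rwa [hmap_tail])]
    exact NormalForm.ext rfl (congrArg (· ++ z) hmap_tail)
  have hhead :
      mulGen m ((σ ^ t) c) ⟨d, altW k (σ e') ++ z, hfree⟩ = ⟨d + 1, z.drop t, hz.drop t⟩ := by
    rw [mulGen, dif_pos hprefix]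
    refine NormalForm.ext rfl ?_
    dsimp only
    rw [show m - 1 = (altW k (σ e')).length + t by simp; omega, List.drop_length_add_append]
  have hmap_init : (altW t c).map (twist m (d + 1)) = altW t e :=
    altW_map _ (commute_twist_swap m _) t c
  have hinit : mulWord m (altW t c) ⟨d + 1, z.drop t, hz.drop t⟩ = ⟨d + 1, z, hz⟩ := by
    rw [mulWord_of_deltaFree _ _ (by rwa [hmap_init, hz'])]
    exact NormalForm.ext rfl (by dsimp only; rw [hmap_init, hz'])
  have hsplit : altW m c = altW t c ++ (σ ^ t) c :: altW k (σ ((σ ^ t) c)) := by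
    rw [← altW_succ, ← altW_add, ← hk, Nat.add_sub_cancel' ht.le]
  rw [hsplit, mulWord_append, mulWord_cons, htail, hhead, hinit]
  rfl


@[simp] lemma mulDeltaPow_zero (s : NormalForm m) : mulDeltaPow m 0 s = s := by
  simp [mulDeltaPow]

@[simp] lemma mulDeltaPow_mulDeltaPow (j k : ℤ) (s : NormalForm m) :
    mulDeltaPow m j (mulDeltaPow m k s) = mulDeltaPow m (k + j) s := by
  simp [mulDeltaPow, add_assoc]

lemma mulGen_mulDeltaPow (i : Fin 2) (k : ℤ) (s : NormalForm m) :
    mulGen m i (mulDeltaPow m k s) = mulDeltaPow m k (mulGen m (twist m k i) s) := by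
  have htwist : twist m (s.exp + k) i = twist m s.exp (twist m k i) := by
    rw [twist, zpow_add]; rfl
  unfold mulGen mulDeltaPow
  simp only [htwist]
  split_ifs <;> ext <;> simp [add_right_comm]

/-- `x_i⁻¹ = altW (m - 1) (σ i) * Δ⁻¹`, since `x_i * altW (m - 1) (σ i) = Δ`. -/
def mulGenInv (m : ℕ) (i : Fin 2) (s : NormalForm m) : NormalForm m :=
  mulWord m (altW (m - 1) (σ i)) (mulDeltaPow m (-1) s)

lemma mulGen_mulGenInv (hm : 0 < m) (i : Fin 2) (s : NormalForm m) :
    mulGen m i (mulGenInv m i s) = s := by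
  rw [mulGenInv, ← mulWord_cons, ← altW_succ, Nat.sub_add_cancel hm, mulWord_altW]
  simp

lemma mulGenInv_mulGen (hm : 0 < m) (i : Fin 2) (s : NormalForm m) :
    mulGenInv m i (mulGen m i s) = s := by
  have hi : twist m (-1) ((σ ^ m) i) = i := by
    rw [twist, zpow_neg_one, ← Equiv.Perm.mul_apply, inv_mul_cancel, Equiv.Perm.one_apply]
  have hword : altW (m - 1) (σ i) ++ [(σ ^ m) i] = altW m (σ i) := by
    conv_rhs =>
      rw [← Nat.sub_add_cancel hm, altW_add, ← swap_pow_succ_apply, Nat.sub_add_cancel hm]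
    rfl
  rw [mulGenInv, ← hi, ← mulGen_mulDeltaPow, hi, ← mulWord_singleton, ← mulWord_append, hword,
    mulWord_altW]
  simp

end Action

def genPerm {m : ℕ} (hm : 0 < m) (i : Fin 2) : Equiv.Perm (NormalForm m) :=
  ⟨mulGen m i, mulGenInv m i, mulGenInv_mulGen hm i, mulGen_mulGenInv hm i⟩

lemma prod_map_genPerm_apply {m : ℕ} (hm : 0 < m) (w : List (Fin 2)) (s : NormalForm m) :
    (w.map (genPerm hm)).prod s = mulWord m w s := by
  induction w with
  | nil => rfl
  | cons i w ih => rw [List.map_cons, List.prod_cons, Equiv.Perm.mul_apply, ih]; rfl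

lemma genPerm_rels {m : ℕ} (hm : 0 < m) :
    ∀ r ∈ artinRels 2 (DMat m), FreeGroup.lift (genPerm hm) r = 1 := by
  rintro _ ⟨i, j, hij, k, hk, rfl⟩
  obtain rfl : k = m := by simp [DMat, hij] at hk; exact_mod_cast hk.symm
  have hdelta : ∀ a b : Fin 2, a ≠ b → ∀ s,
      altProd k (genPerm hm a) (genPerm hm b) s = mulDeltaPow k 1 s := by
    intro a b hab s
    rw [← prod_map_altIdx, prod_map_genPerm_apply, altIdx_eq_altW hab, mulWord_altW]
  rw [map_mul, map_inv, mul_inv_eq_one, map_altProd, map_altProd, FreeGroup.lift_apply_of,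
    FreeGroup.lift_apply_of]
  exact Equiv.ext fun s => (hdelta i j hij s).trans (hdelta j i hij.symm s).symm

def toPerm {m : ℕ} (hm : 0 < m) : DA m →* Equiv.Perm (NormalForm m) :=
  PresentedGroup.toGroup (genPerm_rels hm)

lemma toPerm_posWordElt_apply {m : ℕ} (hm : 0 < m) (w : List (Fin 2)) (s : NormalForm m) :
    toPerm hm (posWordElt m w) s = mulWord m w s := by
  rw [posWordElt, map_list_prod, List.map_map, ← prod_map_genPerm_apply hm]
  rfl

lemma posWordElt_injOn_deltaFree {m : ℕ} (hm : 0 < m) :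
    Set.InjOn (posWordElt m) {z | DeltaFree m z} := by
  have key : ∀ z (hz : DeltaFree m z),
      toPerm hm (posWordElt m z) ⟨0, [], deltaFree_nil hm⟩ = ⟨0, z, hz⟩ := by
    intro z hz
    rw [toPerm_posWordElt_apply, mulWord_of_deltaFree _ _ (by simpa [twist] using hz)]
    ext <;> simp [twist]
  intro u hu v hv h
  simpa using congrArg NormalForm.word ((key u hu).symm.trans (h ▸ key v hv))

lemma altProd_gen_comm {n : ℕ} {M : Fin n → Fin n → ℕ∞} {i j : Fin n} (hij : i ≠ j) {k : ℕ}
    (hk : M i j = k) :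
    altProd k (gen n M i) (gen n M j) = altProd k (gen n M j) (gen n M i) := by
  have := PresentedGroup.mk_eq_mk_of_mul_inv_mem (rels := artinRels n M) ⟨i, j, hij, k, hk, rfl⟩
  rwa [map_altProd, map_altProd] at this

def degreeHom (n : ℕ) (M : Fin n → Fin n → ℕ∞) : ArtinGroup n M →* Multiplicative ℤ :=
  PresentedGroup.toGroup (f := fun _ => Multiplicative.ofAdd 1) <| by
    rintro _ ⟨i, j, -, k, -, rfl⟩
    rw [map_mul, map_inv, map_altProd, map_altProd, FreeGroup.lift_apply_of,
      FreeGroup.lift_apply_of, mul_inv_cancel]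

lemma degreeHom_gen (n : ℕ) (M : Fin n → Fin n → ℕ∞) (i : Fin n) :
    degreeHom n M (gen n M i) = Multiplicative.ofAdd 1 :=
  PresentedGroup.toGroup.of _

lemma abs_degreeHom_prod_le {n : ℕ} {M : Fin n → Fin n → ℕ∞} (l : List (ArtinGroup n M))
    (hl : ∀ a ∈ l, a ∈ genSet n M) :
    |Multiplicative.toAdd (degreeHom n M l.prod)| ≤ l.length := by
  induction l with
  | nil => simp
  | cons a l ih =>
    have ha : |Multiplicative.toAdd (degreeHom n M a)| = 1 := by
      obtain ⟨i, rfl | rfl⟩ := hl a List.mem_cons_self <;> simp [degreeHom_gen]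
    have hl' := ih fun b hb => hl b (List.mem_cons_of_mem a hb)
    rw [List.prod_cons, map_mul, toAdd_mul, List.length_cons, Nat.cast_succ]
    linarith [abs_add_le (Multiplicative.toAdd (degreeHom n M a))
      (Multiplicative.toAdd (degreeHom n M l.prod))]

section Positive

variable {m : ℕ}

lemma posWordElt_append (u v : List (Fin 2)) :
    posWordElt m (u ++ v) = posWordElt m u * posWordElt m v := by
  rw [posWordElt, List.map_append, List.prod_append]; rfl

lemma posWordElt_cons (i : Fin 2) (w : List (Fin 2)) :
    posWordElt m (i :: w) = gen 2 (DMat m) i * posWordElt m w := by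
  simp [posWordElt]

lemma posWordElt_singleton (i : Fin 2) : posWordElt m [i] = gen 2 (DMat m) i := by
  simp [posWordElt]

lemma degreeHom_posWordElt (w : List (Fin 2)) :
    Multiplicative.toAdd (degreeHom 2 (DMat m) (posWordElt m w)) = w.length := by
  rw [posWordElt, map_list_prod, List.map_map]
  simp [Function.comp_def, degreeHom_gen]

lemma ℓD_posWordElt (w : List (Fin 2)) : ℓD m (posWordElt m w) = w.length := by
  have hw : w.length ∈ {N : ℕ | ∃ l : List (DA m), (∀ a ∈ l, a ∈ genSet 2 (DMat m)) ∧
      l.length = N ∧ l.prod = posWordElt m w} :=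
    ⟨w.map (gen 2 (DMat m)), fun a ha => by
      obtain ⟨i, -, rfl⟩ := List.mem_map.mp ha
      exact ⟨i, Or.inl rfl⟩, by simp, rfl⟩
  refine le_antisymm (Nat.sInf_le hw) ?_
  obtain ⟨l, hl, hlen, hprod⟩ := Nat.sInf_mem ⟨_, hw⟩
  have := abs_degreeHom_prod_le l hl
  rw [hprod, degreeHom_posWordElt, hlen, Nat.abs_cast] at this
  exact_mod_cast this

lemma isLeftDiv_posWordElt_append (u v : List (Fin 2)) :
    IsLeftDiv (ℓD m) (posWordElt m u) (posWordElt m (u ++ v)) := by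
  rw [IsLeftDiv, posWordElt_append, inv_mul_cancel_left, ← posWordElt_append, ℓD_posWordElt,
    ℓD_posWordElt, ℓD_posWordElt, List.length_append]

lemma posWordElt_altW (m : ℕ) (c : Fin 2) : posWordElt m (altW m c) = Delta m := by
  rw [posWordElt, altW, prod_map_altIdx]
  fin_cases c
  · rfl
  · exact (altProd_gen_comm (by decide) (by simp [DMat])).symm

def deltaPowWord (m k : ℕ) : List (Fin 2) := (List.replicate k (altIdx m 0 1)).flatten

lemma length_deltaPowWord (m k : ℕ) : (deltaPowWord m k).length = k * m := by
  simp [deltaPowWord, altIdx_eq_altW (show (0 : Fin 2) ≠ 1 by decide)]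

lemma posWordElt_deltaPowWord (m k : ℕ) : posWordElt m (deltaPowWord m k) = Delta m ^ k := by
  induction k with
  | zero => simp [deltaPowWord, posWordElt]
  | succ k ih =>
    rw [deltaPowWord, List.replicate_succ', List.flatten_append, List.flatten_singleton,
      posWordElt_append, ← deltaPowWord, ih, pow_succ, posWordElt, prod_map_altIdx]
    rfl

lemma ℓD_delta_pow (m k : ℕ) : ℓD m (Delta m ^ k) = k * m := by
  rw [← posWordElt_deltaPowWord, ℓD_posWordElt, length_deltaPowWord]

lemma gen_mul_delta (i : Fin 2) :
    gen 2 (DMat m) i * Delta m = Delta m * gen 2 (DMat m) ((σ ^ m) i) := by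
  have h := congrArg (posWordElt m) (altW_add m 1 i)
  rwa [altW_succ, posWordElt_cons, posWordElt_append, posWordElt_altW, posWordElt_altW,
    altW_succ, altW_zero, posWordElt_singleton] at h

lemma posWordElt_mul_delta (v : List (Fin 2)) :
    posWordElt m v * Delta m = Delta m * posWordElt m (v.map (σ ^ m)) := by
  induction v with
  | nil => simp [posWordElt]
  | cons i v ih =>
    rw [List.map_cons, posWordElt_cons, posWordElt_cons, mul_assoc, ih, ← mul_assoc,
      gen_mul_delta, mul_assoc]

lemma posWordElt_mul_delta_pow (v : List (Fin 2)) (k : ℕ) :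
    posWordElt m v * Delta m ^ k = Delta m ^ k * posWordElt m (v.map (twist m k)) := by
  induction k generalizing v with
  | zero => simp [twist]
  | succ k ih =>
    rw [pow_succ', ← mul_assoc, posWordElt_mul_delta, mul_assoc, ih, ← mul_assoc, List.map_map,
      Nat.cast_succ, twist, twist, zpow_add_one, Equiv.Perm.coe_mul]

end Positive

lemma deltaFree_of_isMaxDeltaPow {m s t : ℕ} {u : List (Fin 2)} {g : DA m}
    (hg : posWordElt m (deltaPowWord m s ++ u ++ deltaPowWord m t) = g)
    (hmax : IsMaxDeltaPow m (s + t) g) : DeltaFree m u := by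
  rintro c ⟨p, q, rfl⟩
  set v := (p.map (twist m 1) ++ q).map (twist m t)
  have hp := posWordElt_mul_delta_pow (m := m) p 1
  rw [pow_one, Nat.cast_one] at hp
  have hfactor : g = Delta m ^ (s + t + 1) * posWordElt m v :=
    calc g = Delta m ^ s * (posWordElt m p * Delta m) * posWordElt m q * Delta m ^ t := by
          simp only [← hg, posWordElt_append, posWordElt_deltaPowWord, posWordElt_altW, mul_assoc]
      _ = Delta m ^ (s + 1) * (posWordElt m (p.map (twist m 1) ++ q) * Delta m ^ t) := by
          rw [hp, posWordElt_append, pow_succ]; simp only [mul_assoc]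
      _ = Delta m ^ (s + t + 1) * posWordElt m v := by
          rw [posWordElt_mul_delta_pow, ← mul_assoc, ← pow_add, Nat.add_right_comm]
  have hdiv : IsLeftDiv (ℓD m) (Delta m ^ (s + t + 1)) g := by
    rw [hfactor, ← posWordElt_deltaPowWord, ← posWordElt_append]
    exact isLeftDiv_posWordElt_append _ _
  exact absurd (hmax.2 _ hdiv) (by omega)

lemma exists_eq_append_append_of_prefix_of_suffix {α : Type*} {p q w : List α} (hp : p <+: w)
    (hq : q <:+ w) (hlen : p.length + q.length ≤ w.length) : ∃ u, w = p ++ u ++ q := by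
  obtain ⟨a, rfl⟩ := hp
  obtain ⟨b, hb⟩ := hq
  rcases List.append_eq_append_iff.mp hb with ⟨a', rfl, rfl⟩ | ⟨c, rfl, rfl⟩
  · simp only [List.length_append] at hlen
    obtain rfl : a' = [] := List.eq_nil_of_length_eq_zero (by omega)
    exact ⟨[], by simp⟩
  · exact ⟨c, by simp⟩

theorem positive_geodesic_unique_between_delta_powers_general
    (m : ℕ) (hm : 3 ≤ m) (g : DA m)
    (r : ℕ) (hr : IsMaxDeltaPow m r g)
    (w w' : List (Fin 2))
    (hwg : posWordElt m w = g)
    (hw'g : posWordElt m w' = g)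
    (s : ℕ) (hs : s ≤ r)
    (hpre : (List.replicate s (altIdx m 0 1)).flatten <+: w)
    (hsuf : (List.replicate (r - s) (altIdx m 0 1)).flatten <:+ w)
    (hpre' : (List.replicate s (altIdx m 0 1)).flatten <+: w')
    (hsuf' : (List.replicate (r - s) (altIdx m 0 1)).flatten <:+ w') :
    w = w' := by
  rw [← Nat.add_sub_cancel' hs] at hr
  have hlen : ∀ v, posWordElt m v = g →
      (deltaPowWord m s).length + (deltaPowWord m (r - s)).length ≤ v.length := by
    rintro v rfl
    have := hr.1
    rw [IsLeftDiv, ℓD_delta_pow, ℓD_posWordElt] at this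
    rw [length_deltaPowWord, length_deltaPowWord, ← add_mul]
    omega
  obtain ⟨u, rfl⟩ := exists_eq_append_append_of_prefix_of_suffix hpre hsuf (hlen w hwg)
  obtain ⟨u', rfl⟩ := exists_eq_append_append_of_prefix_of_suffix hpre' hsuf' (hlen w' hw'g)
  have hu : posWordElt m u = posWordElt m u' := by
    simpa [posWordElt_append] using hwg.trans hw'g.symm
  rw [posWordElt_injOn_deltaFree (by omega) (deltaFree_of_isMaxDeltaPow hwg hr)
    (deltaFree_of_isMaxDeltaPow hw'g hr) hu]

/-- **Lemma.** Two positive geodesic words representing the same positive element `g`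
of `DA(m)`, both having `Δ^s` as a prefix and `Δ^{d(g)−s}` as a suffix, are equal. -/
theorem positive_geodesic_unique_between_delta_powers
    (m : ℕ) (hm : 3 ≤ m) (g : DA m) (hpos : posElt m g)
    (r : ℕ) (hr : IsMaxDeltaPow m r g)
    (w w' : List (Fin 2))
    (hw : PosGeodesic m w) (hwg : posWordElt m w = g)
    (hw' : PosGeodesic m w') (hw'g : posWordElt m w' = g)
    (s : ℕ) (hs : s ≤ r)
    (hpre : (List.replicate s (altIdx m 0 1)).flatten <+: w)
    (hsuf : (List.replicate (r - s) (altIdx m 0 1)).flatten <:+ w)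
    (hpre' : (List.replicate s (altIdx m 0 1)).flatten <+: w')
    (hsuf' : (List.replicate (r - s) (altIdx m 0 1)).flatten <:+ w') :
    w = w' :=
  positive_geodesic_unique_between_delta_powers_general m hm g r hr w w' hwg hw'g s hs hpre hsuf
    hpre' hsuf'

end ArtinRD
end
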